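/- arXiv:1812.03300 — 12 statements merged into one kernel-verified Lean document; each statement's English description precedes it below -/
import Mathlib

section
/- For all D, E ∈ P(Z,Ψ): D ⪯_Ψ E if, and only if, D ⊇ E. -/
open Set

/-- Inf-extension of `ψ` to sets: `ψ^△(D) = ⨅_{z ∈ D} ψ(z)` in `EReal`. -/
noncomputable def infExt {Z : Type*} (ψ : Z → EReal) (D : Set Z) : EReal :=
  ⨅ z ∈ D, ψ z

/-- The Ψ-closure `cl_Ψ D = ⋂_{ψ ∈ Ψ} {z | ψ^△(D) ≤ ψ(z)}`. -/
noncomputable def clPsi {Z : Type*} (Ψ : Set (Z → EReal)) (D : Set Z) : Set Z :=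
  ⋂ ψ ∈ Ψ, {z : Z | infExt ψ D ≤ ψ z}

/-- For Ψ-closed sets `D, E`: `D ⪯_Ψ E` iff `D ⊇ E`. -/
theorem stmt3 {Z : Type*} [Preorder Z] (Ψ : Set (Z → EReal))
    (hmono : ∀ ψ ∈ Ψ, Monotone ψ) (D E : Set Z)
    (hD : D = clPsi Ψ D) (hE : E = clPsi Ψ E) :
    (∀ ψ ∈ Ψ, infExt ψ D ≤ infExt ψ E) ↔ E ⊆ D := by
  constructor
  · intro h z hz
    rw [hD]
    simp only [clPsi, mem_iInter, mem_setOf_eq]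
    intro ψ hψ
    exact (h ψ hψ).trans (biInf_le ψ hz)
  · intro h ψ _
    exact le_iInf₂ fun z hz => biInf_le ψ (h hz)
end

section
/- Let Z be a real separated (Hausdorff) locally convex topological vector space, and C ⊆ Z a convex cone with 0 ∈ C and closure(C) ≠ Z. Then for every D ⊆ Z: ⋂_{z* ∈ C⁺, z* ≠ 0} {z ∈ Z | ⨅_{d∈D} (z*(d) : EReal) ≤ z*(z)} = closure(convexHull(D + C)), where the infimum is taken in EReal (equal to +∞ when D = ∅) and D + C = {d + c | d ∈ D, c ∈ C}. -/
/-!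
Each functional `ψ ∈ C⁺` yields a closed convex half-space `{z | inf ψ(D) ≤ ψ z}` containing
`D + C`, which gives `⊇`. Conversely, Hahn–Banach separates a point `z ∉ cl co (D + C)` from
that set by some `ψ`; since the set is stable under adding rays `t • c` (`c ∈ C`, `t ≥ 0`),
`ψ` is bounded below along them and therefore lies in `C⁺`. If `D = ∅` the right side is empty,
and the left side is empty too as soon as `C⁺ ≠ {0}`, which follows from separating a point
from `cl C`.
-/

open Set Pointwise

lemma nonpos_of_forall_add_mul_lt {a b u : ℝ} (h : ∀ t : ℝ, 0 ≤ t → a + t * b < u) : b ≤ 0 := by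
  by_contra! hb
  have hau : 0 ≤ (u - a) / b := div_nonneg (by linarith [h 0 le_rfl]) hb.le
  have := h _ hau
  rw [div_mul_cancel₀ _ hb.ne'] at this
  linarith

section Separation

variable {Z : Type*} [AddCommGroup Z] [Module ℝ Z] [TopologicalSpace Z]
  [IsTopologicalAddGroup Z] [ContinuousSMul ℝ Z] [LocallyConvexSpace ℝ Z]

lemma exists_nonneg_on_cone_separating {C S : Set Z} {s₀ z : Z} (hSconv : Convex ℝ S)
    (hSclosed : IsClosed S) (hray : ∀ c ∈ C, ∀ t : ℝ, 0 ≤ t → s₀ + t • c ∈ S) (hz : z ∉ S) :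
    ∃ ψ : Z →L[ℝ] ℝ, (∀ c ∈ C, 0 ≤ ψ c) ∧ ∃ u, ψ z < u ∧ ∀ s ∈ S, u < ψ s := by
  obtain ⟨f, u, hfS, hfz⟩ := geometric_hahn_banach_closed_point hSconv hSclosed hz
  refine ⟨-f, fun c hc => ?_, -u, by simpa using hfz, fun s hs => by simpa using hfS s hs⟩
  have hfc : f c ≤ 0 := nonpos_of_forall_add_mul_lt fun t ht => by
    simpa using hfS _ (hray c hc t ht)
  simpa using hfc

lemma exists_nonneg_on_cone_ne_zero {C : Set Z} (hCconv : Convex ℝ C)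
    (hCsmul : ∀ t : ℝ, 0 ≤ t → ∀ c ∈ C, t • c ∈ C) (hC0 : (0 : Z) ∈ C)
    (hCne : closure C ≠ univ) : ∃ ψ : Z →L[ℝ] ℝ, (∀ c ∈ C, 0 ≤ ψ c) ∧ ψ ≠ 0 := by
  obtain ⟨x, hx⟩ := (ne_univ_iff_exists_notMem _).mp hCne
  obtain ⟨ψ, hψC, u, hxu, huC⟩ := exists_nonneg_on_cone_separating (s₀ := 0)
    hCconv.closure isClosed_closure
    (fun c hc t ht => subset_closure (by simpa using hCsmul t ht c hc)) hx
  refine ⟨ψ, hψC, ?_⟩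
  rintro rfl
  simpa using hxu.trans (huC 0 (subset_closure hC0))

lemma exists_nonneg_on_cone_lt_iInf {C D : Set Z} {z : Z}
    (hCsmul : ∀ t : ℝ, 0 ≤ t → ∀ c ∈ C, t • c ∈ C) (hC0 : (0 : Z) ∈ C) (hD : D.Nonempty)
    (hz : z ∉ closure (convexHull ℝ (D + C))) :
    ∃ ψ : Z →L[ℝ] ℝ, (∀ c ∈ C, 0 ≤ ψ c) ∧ ψ ≠ 0 ∧
      ((ψ z : ℝ) : EReal) < ⨅ d ∈ D, ((ψ d : ℝ) : EReal) := by
  obtain ⟨d₀, hd₀⟩ := hD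
  have hDC : D + C ⊆ closure (convexHull ℝ (D + C)) :=
    (subset_convexHull ℝ _).trans subset_closure
  have hDS : D ⊆ closure (convexHull ℝ (D + C)) := fun d hd =>
    hDC (by simpa using add_mem_add hd hC0)
  obtain ⟨ψ, hψC, u, hzu, huS⟩ := exists_nonneg_on_cone_separating (s₀ := d₀)
    (convex_convexHull ℝ _).closure isClosed_closure
    (fun c hc t ht => hDC (add_mem_add hd₀ (hCsmul t ht c hc))) hz
  refine ⟨ψ, hψC, ?_, ?_⟩
  · rintro rfl
    simpa using hzu.trans (huS d₀ (hDS hd₀))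
  · calc ((ψ z : ℝ) : EReal) < (u : EReal) := EReal.coe_lt_coe_iff.mpr hzu
      _ ≤ ⨅ d ∈ D, ((ψ d : ℝ) : EReal) :=
        le_iInf₂ fun d hd => EReal.coe_le_coe_iff.mpr (huS d (hDS hd)).le

end Separation

lemma closure_convexHull_add_subset_setOf_iInf_le {Z : Type*} [AddCommGroup Z] [Module ℝ Z]
    [TopologicalSpace Z] {C D : Set Z} {ψ : Z →L[ℝ] ℝ} (hψC : ∀ c ∈ C, 0 ≤ ψ c) :
    closure (convexHull ℝ (D + C)) ⊆
      {z : Z | (⨅ d ∈ D, ((ψ d : ℝ) : EReal)) ≤ ((ψ z : ℝ) : EReal)} := by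
  set I : EReal := ⨅ d ∈ D, ((ψ d : ℝ) : EReal)
  have hupper : IsUpperSet {r : ℝ | I ≤ (r : EReal)} :=
    isUpperSet_Ici I |>.preimage fun _ _ h => EReal.coe_le_coe_iff.mpr h
  have hclosed : IsClosed {z : Z | I ≤ ((ψ z : ℝ) : EReal)} :=
    (isClosed_Ici.preimage continuous_coe_real_ereal).preimage ψ.continuous
  have hconv : Convex ℝ {z : Z | I ≤ ((ψ z : ℝ) : EReal)} :=
    hupper.ordConnected.convex.linear_preimage ψ.toLinearMap
  have hsub : D + C ⊆ {z : Z | I ≤ ((ψ z : ℝ) : EReal)} := by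
    rintro _ ⟨d, hd, c, hc, rfl⟩
    have hle : ψ d ≤ ψ (d + c) := by simpa using hψC c hc
    exact (iInf₂_le d hd : I ≤ _).trans (EReal.coe_le_coe_iff.mpr hle)
  exact closure_minimal (convexHull_min hsub hconv) hclosed

theorem stmt7_general {Z : Type*} [AddCommGroup Z] [Module ℝ Z] [TopologicalSpace Z]
    [IsTopologicalAddGroup Z] [ContinuousSMul ℝ Z] [LocallyConvexSpace ℝ Z]
    (C : Set Z) (hCadd : ∀ c₁ ∈ C, ∀ c₂ ∈ C, c₁ + c₂ ∈ C)
    (hCsmul : ∀ t : ℝ, 0 ≤ t → ∀ c ∈ C, t • c ∈ C) (hC0 : (0 : Z) ∈ C)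
    (hCne : closure C ≠ univ) (D : Set Z) :
    (⋂ ψ ∈ {ψ : Z →L[ℝ] ℝ | (∀ c ∈ C, 0 ≤ ψ c) ∧ ψ ≠ 0},
        {z : Z | (⨅ d ∈ D, ((ψ d : ℝ) : EReal)) ≤ ((ψ z : ℝ) : EReal)})
      = closure (convexHull ℝ (D + C)) := by
  refine Subset.antisymm (fun z hz => ?_)
    (subset_iInter₂ fun ψ hψ => closure_convexHull_add_subset_setOf_iInf_le hψ.1)
  by_contra hzS
  rcases D.eq_empty_or_nonempty with rfl | hD
  · have hCconv : Convex ℝ C := fun a ha b hb s t hs ht _ =>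
      hCadd _ (hCsmul s hs a ha) _ (hCsmul t ht b hb)
    obtain ⟨ψ, hψC, hψ0⟩ := exists_nonneg_on_cone_ne_zero hCconv hCsmul hC0 hCne
    have hzψ := mem_iInter₂.mp hz ψ ⟨hψC, hψ0⟩
    simp at hzψ
  · obtain ⟨ψ, hψC, hψ0, hlt⟩ := exists_nonneg_on_cone_lt_iInf hCsmul hC0 hD hzS
    exact (mem_iInter₂.mp hz ψ ⟨hψC, hψ0⟩).not_gt hlt

/-- In a real Hausdorff locally convex space, for a convex cone `C`
with `0 ∈ C` and `cl C ≠ Z`, the closure w.r.t. the family `C⁺ \ {0}` of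
monotone continuous linear functionals is `cl co (D + C)`. -/
theorem stmt7 {Z : Type*} [AddCommGroup Z] [Module ℝ Z] [TopologicalSpace Z]
    [IsTopologicalAddGroup Z] [ContinuousSMul ℝ Z] [LocallyConvexSpace ℝ Z] [T2Space Z]
    (C : Set Z) (hCadd : ∀ c₁ ∈ C, ∀ c₂ ∈ C, c₁ + c₂ ∈ C)
    (hCsmul : ∀ t : ℝ, 0 ≤ t → ∀ c ∈ C, t • c ∈ C) (hC0 : (0 : Z) ∈ C)
    (hCne : closure C ≠ univ) (D : Set Z) :
    (⋂ ψ ∈ {ψ : Z →L[ℝ] ℝ | (∀ c ∈ C, 0 ≤ ψ c) ∧ ψ ≠ 0},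
        {z : Z | (⨅ d ∈ D, ((ψ d : ℝ) : EReal)) ≤ ((ψ z : ℝ) : EReal)})
      = closure (convexHull ℝ (D + C)) :=
  stmt7_general C hCadd hCsmul hC0 hCne D
end

section
/- Let Z be a real vector space, C ⊆ Z a convex cone with 0 ∈ C, and e ∈ C \ (−C). Then for every D ⊆ Z and every z ∈ Z: z ∈ dcl(D + C) if, and only if, φ_{D+C,e}(y) ≤ τ_{y,e}(z) for all y ∈ Z. -/
open Set Pointwise Filter

/-- `φ_{A,e}(y) = inf {t ∈ ℝ | y + t•e ∈ A}` in `EReal` (inf of ∅ is `+∞`). -/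
noncomputable def phiExt {Z : Type*} [AddCommGroup Z] [Module ℝ Z]
    (A : Set Z) (e y : Z) : EReal :=
  ⨅ t ∈ {t : ℝ | y + t • e ∈ A}, ((t : ℝ) : EReal)

/-- The `e`-directional closure of `A`. -/
def dcl {Z : Type*} [AddCommGroup Z] [Module ℝ Z] (e : Z) (A : Set Z) : Set Z :=
  {z : Z | ∃ s : ℕ → ℝ, Tendsto s atTop (nhds 0) ∧ ∀ n, z + s n • e ∈ A}

/-- `z ∈ dcl(D + C)` iff `φ_{D+C,e}(y) ≤ τ_{y,e}(z)` for all `y`. -/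
theorem stmt8 {Z : Type*} [AddCommGroup Z] [Module ℝ Z]
    (C : Set Z) (hCadd : ∀ c₁ ∈ C, ∀ c₂ ∈ C, c₁ + c₂ ∈ C)
    (hCsmul : ∀ t : ℝ, 0 ≤ t → ∀ c ∈ C, t • c ∈ C) (hC0 : (0 : Z) ∈ C)
    (e : Z) (he : e ∈ C \ (-C)) (D : Set Z) (z : Z) :
    z ∈ dcl e (D + C) ↔ ∀ y : Z, phiExt (D + C) e y ≤ phiExt ({z} + C) e y := by
  constructor
  · rintro ⟨s, hs, hsn⟩ y
    refine le_iInf₂ fun t ht => ?_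
    obtain ⟨z', hz', c, hc, hzc⟩ := Set.mem_add.1 ht
    rw [Set.mem_singleton_iff] at hz'
    rw [hz'] at hzc
    have key : ∀ n, phiExt (D + C) e y ≤ ((t + s n : ℝ) : EReal) := by
      intro n
      refine iInf₂_le _ ?_
      show y + (t + s n) • e ∈ D + C
      obtain ⟨d, hd, c', hc', hdc⟩ := Set.mem_add.1 (hsn n)
      refine Set.mem_add.2 ⟨d, hd, c' + c, hCadd _ hc' _ hc, ?_⟩
      have h1 : y + (t + s n) • e = (z + s n • e) + c := by
        rw [add_smul, ← add_assoc, ← hzc]; abel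
      rw [h1, ← hdc]; abel
    by_contra h
    push_neg at h
    obtain ⟨r, hr1, hr2⟩ := EReal.exists_between_coe_real h
    have hrt : (0 : ℝ) < r - t := by
      rw [sub_pos]; exact_mod_cast hr1
    obtain ⟨n, hn⟩ := (hs.eventually (eventually_lt_nhds hrt)).exists
    have : phiExt (D + C) e y < (r : EReal) :=
      (key n).trans_lt (EReal.coe_lt_coe_iff.2 (by linarith))
    exact absurd hr2 (lt_asymm this)
  · intro h
    have h0 : phiExt (D + C) e z ≤ (0 : EReal) := by
      refine (h z).trans ?_
      refine iInf₂_le_of_le 0 ?_ ?_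
      · show z + (0 : ℝ) • e ∈ {z} + C
        exact Set.mem_add.2 ⟨z, rfl, 0, hC0, by simp⟩
      · simp
    have hup : ∀ t t' : ℝ, t ≤ t' → z + t • e ∈ D + C → z + t' • e ∈ D + C := by
      intro t t' htt hmem
      obtain ⟨d, hd, c, hc, hdc⟩ := Set.mem_add.1 hmem
      refine Set.mem_add.2 ⟨d, hd, c + (t' - t) • e,
        hCadd _ hc _ (hCsmul _ (by linarith) _ he.1), ?_⟩
      have h1 : z + t' • e = (z + t • e) + (t' - t) • e := by
        rw [add_assoc, ← add_smul]; ring_nf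
      rw [h1, ← hdc]; abel
    have hex : ∀ n : ℕ, z + (1 / (n + 1) : ℝ) • e ∈ D + C := by
      intro n
      have hpos : (0 : EReal) < ((1 / (n + 1) : ℝ) : EReal) := by
        have : (0 : ℝ) < 1 / (n + 1) := by positivity
        exact_mod_cast this
      have hlt := lt_of_le_of_lt h0 hpos
      rw [phiExt] at hlt
      simp only [iInf_lt_iff] at hlt
      obtain ⟨t, ht, htlt⟩ := hlt
      exact hup t _ (le_of_lt (EReal.coe_lt_coe_iff.1 htlt)) ht
    exact ⟨fun n => 1 / (n + 1), tendsto_one_div_add_atTop_nhds_zero_nat, hex⟩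
end

section
/- Let Z be a real vector space, C ⊆ Z a convex cone with 0 ∈ C which is e-directionally closed, e ∈ C \ (−C), and let z' : Z → ℝ be a linear functional with z'(e) = 1 and z'(c) ≥ 0 for all c ∈ C. Put 𝒴 = {y ∈ Z | z'(y) = −1}. Then for all z₁, z₂ ∈ Z: z₂ − z₁ ∈ C if, and only if, τ_{y,e}(z₁) ≤ τ_{y,e}(z₂) for all y ∈ 𝒴 (i.e., the family {τ_{y,e}}_{y∈𝒴} represents the preorder ≤_C). -/
open Set Pointwise Filter

/-- `τ_{y,e}(z) = inf {t ∈ ℝ | y + t•e ∈ z + C}` in `EReal` (inf of ∅ is `+∞`). -/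
noncomputable def tauExt {Z : Type*} [AddCommGroup Z] [Module ℝ Z]
    (C : Set Z) (e y z : Z) : EReal :=
  ⨅ t ∈ {t : ℝ | y + t • e ∈ {z} + C}, ((t : ℝ) : EReal)

/-- `A` is `e`-directionally closed. -/
def EDirClosed {Z : Type*} [AddCommGroup Z] [Module ℝ Z] (e : Z) (A : Set Z) : Prop :=
  ∀ z : Z, ∀ s : ℕ → ℝ, Tendsto s atTop (nhds 0) → (∀ n, z + s n • e ∈ A) → z ∈ A

/-- the family `{τ_{y,e}}_{y ∈ 𝒴}` with
`𝒴 = {y | z'(y) = -1}` represents `≤_C`. -/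
theorem stmt9 {Z : Type*} [AddCommGroup Z] [Module ℝ Z]
    (C : Set Z) (hCadd : ∀ c₁ ∈ C, ∀ c₂ ∈ C, c₁ + c₂ ∈ C)
    (hCsmul : ∀ t : ℝ, 0 ≤ t → ∀ c ∈ C, t • c ∈ C) (hC0 : (0 : Z) ∈ C)
    (e : Z) (he : e ∈ C \ (-C)) (hdc : EDirClosed e C)
    (z' : Z →ₗ[ℝ] ℝ) (hz'e : z' e = 1) (hz'C : ∀ c ∈ C, 0 ≤ z' c)
    (z₁ z₂ : Z) :
    z₂ - z₁ ∈ C ↔ ∀ y ∈ {y : Z | z' y = -1}, tauExt C e y z₁ ≤ tauExt C e y z₂ := by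
  have memiff : ∀ z x : Z, x ∈ ({z} : Set Z) + C ↔ x - z ∈ C := by
    intro z x
    constructor
    · rintro ⟨a, ha, c, hc, rfl⟩
      rw [Set.mem_singleton_iff] at ha
      subst ha
      simpa using hc
    · intro hx
      exact ⟨z, rfl, x - z, hx, by module⟩
  constructor
  · intro hC y _
    refine le_iInf₂ fun t ht => iInf₂_le t ?_
    rw [Set.mem_setOf_eq, memiff] at ht ⊢
    have : y + t • e - z₁ = (z₂ - z₁) + (y + t • e - z₂) := by abel
    rw [this]
    exact hCadd _ hC _ ht
  · intro h
    set t₀ := z' z₂ + 1 with ht₀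
    set y := z₂ - t₀ • e with hy
    have hymem : y ∈ {y : Z | z' y = -1} := by
      simp only [Set.mem_setOf_eq, hy, map_sub, map_smul, hz'e, smul_eq_mul, ht₀]
      ring
    have hle := h y hymem
    have hτ2 : tauExt C e y z₂ ≤ (t₀ : EReal) := by
      refine iInf₂_le t₀ ?_
      rw [Set.mem_setOf_eq, memiff]
      have : y + t₀ • e - z₂ = 0 := by rw [hy]; abel
      rw [this]; exact hC0
    have key : ∀ n : ℕ, z₂ - z₁ + (1 / (n + 1) : ℝ) • e ∈ C := by
      intro n
      have hε : (0 : ℝ) < 1 / (n + 1) := by positivity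
      have hlt : tauExt C e y z₁ < ((t₀ + 1 / (n + 1) : ℝ) : EReal) := by
        refine lt_of_le_of_lt (hle.trans hτ2) ?_
        exact_mod_cast (by linarith : t₀ < t₀ + 1 / (n + 1))
      obtain ⟨t, ht, htlt⟩ :
          ∃ t, (y + t • e - z₁ ∈ C) ∧ t < t₀ + 1 / (n + 1) := by
        by_contra hcon
        push_neg at hcon
        refine absurd (le_iInf₂ fun t ht => ?_) (not_le.mpr hlt)
        rw [Set.mem_setOf_eq, memiff] at ht
        exact_mod_cast hcon t ht
      have h1 : z₂ - z₁ + (t - t₀) • e = y + t • e - z₁ := by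
        rw [hy, sub_smul]; abel
      have h2 : z₂ - z₁ + (1 / (n + 1) : ℝ) • e
          = (y + t • e - z₁) + (t₀ + 1 / (n + 1) - t) • e := by
        rw [← h1]
        module
      rw [h2]
      exact hCadd _ ht _ (hCsmul _ (by linarith) _ he.1)
    exact hdc (z₂ - z₁) (fun n => 1 / (n + 1)) tendsto_one_div_add_atTop_nhds_zero_nat key
end

section
/- Let Z be a real normed space and C ⊆ Z a closed convex cone with 0 ∈ C and C ≠ Z. Then for all z₁, z₂ ∈ Z: z₂ − z₁ ∈ C if, and only if, Δ_C(y − z₁) ≤ Δ_C(y − z₂) for all y ∈ Z (i.e., the family of oriented distance functions {y ↦ Δ_C(y − ·)} represents the preorder ≤_C). -/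
open Set Metric

/-- The oriented distance function `Δ_A(w) = d_A(w) − d_{Z∖A}(w)`. -/
noncomputable def orientedDist {Z : Type*} [NormedAddCommGroup Z]
    (A : Set Z) (w : Z) : ℝ :=
  infDist w A - infDist w Aᶜ

lemma infDist_aux {Z : Type*} [NormedAddCommGroup Z] {s t : Set Z}
    (ht : t.Nonempty) (v : Z) (h : ∀ a ∈ t, a + v ∈ s) (w : Z) :
    infDist (w + v) s ≤ infDist w t := by
  by_contra hlt
  push_neg at hlt
  obtain ⟨b, hb, hd⟩ := (infDist_lt_iff ht).mp hlt
  have : infDist (w + v) s ≤ dist w b :=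
    calc infDist (w + v) s ≤ dist (w + v) (b + v) := infDist_le_dist_of_mem (h b hb)
      _ = dist w b := dist_add_right w b v
  linarith

/-- for a closed convex cone `C ≠ Z` with `0 ∈ C` in a real normed
space, `z₂ − z₁ ∈ C` iff `Δ_C(y − z₁) ≤ Δ_C(y − z₂)` for all `y`. -/
theorem stmt10 {Z : Type*} [NormedAddCommGroup Z] [NormedSpace ℝ Z]
    (C : Set Z) (hCclosed : IsClosed C)
    (hCadd : ∀ c₁ ∈ C, ∀ c₂ ∈ C, c₁ + c₂ ∈ C)
    (hCsmul : ∀ t : ℝ, 0 ≤ t → ∀ c ∈ C, t • c ∈ C)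
    (hC0 : (0 : Z) ∈ C) (hCne : C ≠ univ) (z₁ z₂ : Z) :
    z₂ - z₁ ∈ C ↔ ∀ y : Z, orientedDist C (y - z₁) ≤ orientedDist C (y - z₂) := by
  constructor
  · intro hc y
    set c := z₂ - z₁ with hc_def
    have hy : y - z₁ = (y - z₂) + c := by rw [hc_def]; abel
    rw [hy]
    unfold orientedDist
    have h1 : infDist ((y - z₂) + c) C ≤ infDist (y - z₂) C := by
      apply infDist_aux ⟨0, hC0⟩ c (fun a ha => hCadd a ha c hc)
    have h2 : infDist (y - z₂) Cᶜ ≤ infDist ((y - z₂) + c) Cᶜ := by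
      rcases eq_empty_or_nonempty Cᶜ with he | hne
      · simp [he]
      · have := infDist_aux hne (-c)
          (s := Cᶜ) (t := Cᶜ)
          (fun b hb => by
            intro hmem
            exact hb (by simpa using hCadd _ hmem c hc)) ((y - z₂) + c)
        simpa using this
    linarith
  · intro h
    have h2 := h z₂
    rw [sub_self] at h2
    by_contra hnot
    have hmem : z₂ - z₁ ∈ Cᶜ := hnot
    have hpos : 0 < infDist (z₂ - z₁) C := by
      rw [← hCclosed.notMem_iff_infDist_pos ⟨0, hC0⟩]
      exact hnot
    have hz : infDist (z₂ - z₁) Cᶜ = 0 := infDist_zero_of_mem hmem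
    have h0C : infDist (0 : Z) C = 0 := infDist_zero_of_mem hC0
    have h0c : 0 ≤ infDist (0 : Z) Cᶜ := infDist_nonneg
    unfold orientedDist at h2
    rw [hz, h0C] at h2
    linarith
end

section
/- Let Z be a real normed space and C ⊆ Z a closed convex cone with 0 ∈ C and C ≠ Z. For y ∈ Z let p_y : Z → ℝ be p_y(z) = Δ_C(y − z), and let Ψ = {p_y | y ∈ Z}. Then for every A ⊆ Z: cl_Ψ A = closure(A + C); explicitly, ⋂_{y∈Z} {z ∈ Z | ⨅_{a∈A} (Δ_C(y − a) : EReal) ≤ Δ_C(y − z)} = closure(A + C), where the infimum is taken in EReal (equal to +∞ when A = ∅) and A + C = {a + c | a ∈ A, c ∈ C}. -/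
open Set Metric Pointwise

lemma infDist_translate {Z : Type*} [NormedAddCommGroup Z] (s : Set Z) (x c : Z) :
    infDist (x + c) ((· + c) '' s) = infDist x s :=
  infDist_image (IsometryEquiv.addRight c).isometry

lemma orientedDist_add_le {Z : Type*} [NormedAddCommGroup Z]
    (C : Set Z) (hCadd : ∀ c₁ ∈ C, ∀ c₂ ∈ C, c₁ + c₂ ∈ C)
    (hC0 : (0 : Z) ∈ C) (hCne : C ≠ univ) (w c : Z) (hc : c ∈ C) :
    orientedDist C (w + c) ≤ orientedDist C w := by
  have hCcne : Cᶜ.Nonempty := by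
    rw [nonempty_compl]; exact hCne
  have h1 : infDist (w + c) C ≤ infDist w C := by
    have hsub : (· + c) '' C ⊆ C := by
      rintro _ ⟨a, ha, rfl⟩; exact hCadd a ha c hc
    calc infDist (w + c) C ≤ infDist (w + c) ((· + c) '' C) :=
          infDist_le_infDist_of_subset hsub ⟨0 + c, 0, hC0, rfl⟩
      _ = infDist w C := infDist_translate C w c
  have h2 : infDist w Cᶜ ≤ infDist (w + c) Cᶜ := by
    have hsub : (· + (-c)) '' Cᶜ ⊆ Cᶜ := by
      rintro _ ⟨b, hb, rfl⟩
      intro hmem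
      exact hb (by simpa using hCadd _ hmem c hc)
    have him : (· + c) '' ((· + (-c)) '' Cᶜ) = Cᶜ := by
      ext x; simp [Set.image_image]
    calc infDist w Cᶜ ≤ infDist w ((· + (-c)) '' Cᶜ) :=
          infDist_le_infDist_of_subset hsub (hCcne.image _)
      _ = infDist (w + c) ((· + c) '' ((· + (-c)) '' Cᶜ)) :=
          (infDist_translate _ w c).symm
      _ = infDist (w + c) Cᶜ := by rw [him]
  unfold orientedDist
  linarith

/-- for the family `Ψ = {p_y | y ∈ Z}` with `p_y(z) = Δ_C(y − z)`,
the Ψ-closure of any `A ⊆ Z` is `cl(A + C)`. -/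
theorem stmt11 {Z : Type*} [NormedAddCommGroup Z] [NormedSpace ℝ Z]
    (C : Set Z) (hCclosed : IsClosed C)
    (hCadd : ∀ c₁ ∈ C, ∀ c₂ ∈ C, c₁ + c₂ ∈ C)
    (hCsmul : ∀ t : ℝ, 0 ≤ t → ∀ c ∈ C, t • c ∈ C)
    (hC0 : (0 : Z) ∈ C) (hCne : C ≠ univ) (A : Set Z) :
    (⋂ y : Z, {z : Z |
        (⨅ a ∈ A, ((orientedDist C (y - a) : ℝ) : EReal))
          ≤ ((orientedDist C (y - z) : ℝ) : EReal)})
      = closure (A + C) := by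
  have hCn : C.Nonempty := ⟨0, hC0⟩
  apply Set.Subset.antisymm
  · -- ⋂ ⊆ closure (A + C)
    intro z hz
    have hz' := Set.mem_iInter.mp hz z
    simp only [Set.mem_setOf_eq] at hz'
    -- Δ_C(z - z) = Δ_C 0 ≤ 0
    have hΔ0 : orientedDist C (z - z) ≤ 0 := by
      rw [sub_self]
      unfold orientedDist
      have : infDist (0 : Z) C = 0 := infDist_zero_of_mem hC0
      rw [this]
      simp [infDist_nonneg]
    rw [Metric.mem_closure_iff]
    intro ε hε
    -- the iInf is < ε
    have hlt : (⨅ a ∈ A, ((orientedDist C (z - a) : ℝ) : EReal)) < (ε : EReal) := by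
      refine lt_of_le_of_lt hz' ?_
      exact_mod_cast lt_of_le_of_lt hΔ0 hε
    rw [iInf_lt_iff] at hlt
    obtain ⟨a, ha⟩ := hlt
    rw [iInf_lt_iff] at ha
    obtain ⟨haA, ha⟩ := ha
    have ha' : orientedDist C (z - a) < ε := by exact_mod_cast ha
    -- infDist (z - a) C < ε
    have hinf : infDist (z - a) C < ε := by
      by_cases hmem : z - a ∈ C
      · rw [infDist_zero_of_mem hmem]; exact hε
      · have : infDist (z - a) Cᶜ = 0 := infDist_zero_of_mem hmem
        unfold orientedDist at ha'
        rw [this] at ha'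
        linarith
    obtain ⟨c, hcC, hc⟩ := (infDist_lt_iff hCn).mp hinf
    refine ⟨a + c, Set.add_mem_add haA hcC, ?_⟩
    rw [dist_eq_norm]
    calc ‖z - (a + c)‖ = dist (z - a) c := by rw [dist_eq_norm]; abel_nf
      _ < ε := hc
  · -- closure (A + C) ⊆ ⋂
    apply closure_minimal
    · intro w hw
      obtain ⟨a, haA, c, hcC, rfl⟩ := hw
      rw [Set.mem_iInter]
      intro y
      simp only [Set.mem_setOf_eq]
      have h1 : (⨅ a' ∈ A, ((orientedDist C (y - a') : ℝ) : EReal))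
          ≤ ((orientedDist C (y - a) : ℝ) : EReal) := iInf₂_le a haA
      refine h1.trans ?_
      have : orientedDist C (y - (a + c)) ≥ orientedDist C (y - a) → True := fun _ => trivial
      have key : orientedDist C (y - a) ≤ orientedDist C (y - (a + c)) := by
        have := orientedDist_add_le C hCadd hC0 hCne (y - (a + c)) c hcC
        have heq : y - (a + c) + c = y - a := by abel
        rwa [heq] at this
      exact_mod_cast key
    · apply isClosed_iInter
      intro y
      have hcont : Continuous fun z : Z => orientedDist C (y - z) := by
        unfold orientedDist
        exact ((continuous_infDist_pt C).sub (continuous_infDist_pt Cᶜ)).comp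
          (continuous_const.sub continuous_id)
      have : {z : Z | (⨅ a ∈ A, ((orientedDist C (y - a) : ℝ) : EReal))
          ≤ ((orientedDist C (y - z) : ℝ) : EReal)}
          = (fun z : Z => orientedDist C (y - z)) ⁻¹'
            ((fun x : ℝ => (x : EReal)) ⁻¹'
              Set.Ici (⨅ a ∈ A, ((orientedDist C (y - a) : ℝ) : EReal))) := rfl
      rw [this]
      exact (isClosed_Ici.preimage continuous_coe_real_ereal).preimage hcont
end

section
/- Let ε > 0, let Ψ be nonempty and X nonempty. Then there exists a nonempty set M ⊆ X which is an (ε,Ψ)-solution of the problem of minimizing f over X: M is an (ε,Ψ)-infimizer of f and every element of M is an (ε,Ψ)-minimizer of f. -/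
open Set Classical Pointwise

/-- `I_ψ = ⨅_{x ∈ X} ψ^△(f(x))`. -/
noncomputable def infVal {X Z : Type*} (f : X → Set Z) (ψ : Z → EReal) : EReal :=
  ⨅ x : X, infExt ψ (f x)

/-- The bound `−1/ε`, with the convention `−1/0 := −∞`, as an `EReal`. -/
noncomputable def negInvBound (ε : ℝ) : EReal :=
  if ε = 0 then ⊥ else (((-(1 / ε)) : ℝ) : EReal)

/-- `x` is an `(ε,Ψ)`-minimizer of `f`: there is `ψ ∈ Ψ` with
`ψ^△(f(x)) ≤ I_ψ + ε` if `I_ψ ≠ −∞`, and `ψ^△(f(x)) ≤ −1/ε` if `I_ψ = −∞`. -/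
noncomputable def IsEpsMin {X Z : Type*} (Ψ : Set (Z → EReal)) (f : X → Set Z)
    (ε : ℝ) (x : X) : Prop :=
  ∃ ψ ∈ Ψ, if infVal f ψ = ⊥ then infExt ψ (f x) ≤ negInvBound ε
    else infExt ψ (f x) ≤ infVal f ψ + (ε : EReal)

/-- `x` is an `(ε+,Ψ)`-minimizer of `f`. -/
noncomputable def IsEpsPlusMin {X Z : Type*} (Ψ : Set (Z → EReal)) (f : X → Set Z)
    (ε : ℝ) (x : X) : Prop :=
  ∀ δ : ℝ, 0 < δ → IsEpsMin Ψ f (ε + δ) x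

/-- `Min(f,ε,Ψ)`: the set of `(ε,Ψ)`-minimizers of `f`. -/
noncomputable def MinSet {X Z : Type*} (Ψ : Set (Z → EReal)) (f : X → Set Z)
    (ε : ℝ) : Set X :=
  {x : X | IsEpsMin Ψ f ε x}

/-- `Min(f,ε+,Ψ)`: the set of `(ε+,Ψ)`-minimizers of `f`. -/
noncomputable def MinPlusSet {X Z : Type*} (Ψ : Set (Z → EReal)) (f : X → Set Z)
    (ε : ℝ) : Set X :=
  {x : X | IsEpsPlusMin Ψ f ε x}

/-- for `ε > 0` there exists a nonempty `(ε,Ψ)`-solution `M`: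
an `(ε,Ψ)`-infimizer all of whose elements are `(ε,Ψ)`-minimizers. -/
theorem stmt13 {X Z : Type*} [Nonempty X] [Preorder Z] (Ψ : Set (Z → EReal))
    (hΨ : Ψ.Nonempty) (hmono : ∀ ψ ∈ Ψ, Monotone ψ) (f : X → Set Z)
    (hf : ∀ x, f x = clPsi Ψ (f x)) (ε : ℝ) (hε : 0 < ε) :
    ∃ M : Set X, M.Nonempty ∧
      (∀ ψ ∈ Ψ, if infVal f ψ = ⊥ then (⨅ x ∈ M, infExt ψ (f x)) ≤ negInvBound ε
        else (⨅ x ∈ M, infExt ψ (f x)) ≤ infVal f ψ + (ε : EReal)) ∧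
      (∀ x ∈ M, IsEpsMin Ψ f ε x) := by
  have key : ∀ ψ : Z → EReal, ∃ x : X,
      (if infVal f ψ = ⊥ then infExt ψ (f x) ≤ negInvBound ε
        else infExt ψ (f x) ≤ infVal f ψ + (ε : EReal)) := by
    intro ψ
    by_cases h : infVal f ψ = ⊥
    · have hb : (⊥ : EReal) < negInvBound ε := by
        rw [negInvBound, if_neg hε.ne']
        exact EReal.bot_lt_coe _
      have hlt : (⨅ x : X, infExt ψ (f x)) < negInvBound ε := by
        have : infVal f ψ < negInvBound ε := h ▸ hb
        exact this
      obtain ⟨x, hx⟩ := iInf_lt_iff.mp hlt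
      exact ⟨x, by simp [h, hx.le]⟩
    · rcases eq_or_ne (infVal f ψ) ⊤ with htop | htop
      · refine ⟨Classical.arbitrary X, ?_⟩
        simp only [h, if_false, htop]
        rw [EReal.top_add_of_ne_bot (by exact_mod_cast EReal.coe_ne_bot ε)]
        exact le_top
      · have gen : ∀ a : EReal, a ≠ ⊥ → a ≠ ⊤ → a < a + (ε : EReal) := by
          intro a hb ht
          induction a using EReal.rec with
          | bot => simp at hb
          | coe r =>
            rw [← EReal.coe_add]
            exact_mod_cast lt_add_of_pos_right r hε
          | top => simp at ht
        have hlt : infVal f ψ < infVal f ψ + (ε : EReal) := gen _ h htop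
        have hlt' : (⨅ x : X, infExt ψ (f x)) < infVal f ψ + (ε : EReal) := hlt
        obtain ⟨x, hx⟩ := iInf_lt_iff.mp hlt'
        exact ⟨x, by simp [h, hx.le]⟩
  choose g hg using key
  refine ⟨g '' Ψ, hΨ.image g, ?_, ?_⟩
  · intro ψ hψ
    have hle : (⨅ x ∈ g '' Ψ, infExt ψ (f x)) ≤ infExt ψ (f (g ψ)) :=
      biInf_le _ (Set.mem_image_of_mem g hψ)
    have H := hg ψ
    by_cases h : infVal f ψ = ⊥
    · rw [if_pos h] at H ⊢
      exact hle.trans H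
    · rw [if_neg h] at H ⊢
      exact hle.trans H
  · rintro x ⟨ψ, hψ, rfl⟩
    exact ⟨ψ, hψ, hg ψ⟩
end

section
/- Let X be a Hausdorff topological space, Ψ nonempty, and f : X → P(Z,Ψ). Assume that for each ψ ∈ Ψ the function x ↦ ψ^△(f(x)) is lower semicontinuous on X, and that there exists r_ψ ∈ ℝ with I_ψ < r_ψ such that {x ∈ X | ψ^△(f(x)) ≤ r_ψ} is compact. Then for each ψ ∈ Ψ there is x_ψ ∈ X with ψ^△(f(x_ψ)) = I_ψ, and the set M = {x ∈ X | ∃ ψ ∈ Ψ, ψ^△(f(x)) = I_ψ} is nonempty and a (0,Ψ)-solution: for every ψ ∈ Ψ, ⨅_{x∈M} ψ^△(f(x)) = I_ψ, and every x ∈ M is a (0,Ψ)-minimizer of f. -/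
open Set Classical Pointwise

lemma attain_aux {X : Type*} [TopologicalSpace X] (g : X → EReal)
    (hlsc : LowerSemicontinuous g) (r : ℝ) (hr : (⨅ x, g x) < (r : EReal))
    (hc : IsCompact {x | g x ≤ (r : EReal)}) : ∃ x, g x = ⨅ x, g x := by
  set I := ⨅ x, g x with hI
  set ι := {a : EReal // I < a ∧ a ≤ (r : EReal)}
  haveI : Nonempty ι := ⟨⟨(r : EReal), hr, le_refl _⟩⟩
  set F : ι → Set X := fun a => {x | g x ≤ a.1}
  have hFcl : ∀ a : ι, IsClosed (F a) := fun a => hlsc.isClosed_preimage a.1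
  have hFc : ∀ a : ι, IsCompact (F a) :=
    fun a => hc.of_isClosed_subset (hFcl a) (fun x hx => le_trans hx a.2.2)
  have hFne : ∀ a : ι, (F a).Nonempty := by
    intro a
    obtain ⟨x, hx⟩ := iInf_lt_iff.1 a.2.1
    exact ⟨x, le_of_lt hx⟩
  have hdir : Directed (· ⊇ ·) F := by
    intro a b
    refine ⟨⟨min a.1 b.1, lt_min a.2.1 b.2.1, le_trans (min_le_left _ _) a.2.2⟩, ?_, ?_⟩
    · intro x hx; exact le_trans hx (min_le_left a.1 b.1)
    · intro x hx; exact le_trans hx (min_le_right a.1 b.1)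
  obtain ⟨x₀, hx₀⟩ := IsCompact.nonempty_iInter_of_directed_nonempty_isCompact_isClosed
    F hdir hFne hFc hFcl
  refine ⟨x₀, le_antisymm ?_ (iInf_le _ _)⟩
  by_contra h
  push_neg at h
  obtain ⟨a, haI, hax⟩ := exists_between (lt_min h hr)
  have : x₀ ∈ F ⟨a, haI, le_of_lt (lt_of_lt_of_le hax (min_le_right _ _))⟩ :=
    mem_iInter.1 hx₀ _
  exact absurd (lt_of_le_of_lt this (lt_of_lt_of_le hax (min_le_left _ _))) (lt_irrefl _)

/-- Weierstrass for set optimization: if each `ψ^△ ∘ f` is lsc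
with a compact sublevel set strictly above the infimum, then for each `ψ ∈ Ψ`
the scalar infimum `I_ψ` is attained, and the set `M` of points attaining some
`I_ψ` is a nonempty `(0,Ψ)`-solution. -/
theorem stmt15 {X Z : Type*} [TopologicalSpace X] [T2Space X] [Preorder Z]
    (Ψ : Set (Z → EReal)) (hΨ : Ψ.Nonempty) (hmono : ∀ ψ ∈ Ψ, Monotone ψ)
    (f : X → Set Z) (hf : ∀ x, f x = clPsi Ψ (f x))
    (hlsc : ∀ ψ ∈ Ψ, LowerSemicontinuous (fun x => infExt ψ (f x)))
    (hcpt : ∀ ψ ∈ Ψ, ∃ r : ℝ, infVal f ψ < (r : EReal) ∧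
      IsCompact {x : X | infExt ψ (f x) ≤ (r : EReal)}) :
    (∀ ψ ∈ Ψ, ∃ x : X, infExt ψ (f x) = infVal f ψ) ∧
    ({x : X | ∃ ψ ∈ Ψ, infExt ψ (f x) = infVal f ψ}.Nonempty ∧
      (∀ ψ ∈ Ψ,
        (⨅ x ∈ {x : X | ∃ ψ' ∈ Ψ, infExt ψ' (f x) = infVal f ψ'}, infExt ψ (f x))
          = infVal f ψ) ∧
      (∀ x ∈ {x : X | ∃ ψ' ∈ Ψ, infExt ψ' (f x) = infVal f ψ'},
        ∃ ψ ∈ Ψ, infExt ψ (f x) ≤ infVal f ψ)) := by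
  have key : ∀ ψ ∈ Ψ, ∃ x : X, infExt ψ (f x) = infVal f ψ := by
    intro ψ hψ
    obtain ⟨r, hr, hc⟩ := hcpt ψ hψ
    exact attain_aux _ (hlsc ψ hψ) r hr hc
  refine ⟨key, ?_, ?_, ?_⟩
  · obtain ⟨ψ, hψ⟩ := hΨ
    obtain ⟨x, hx⟩ := key ψ hψ
    exact ⟨x, ψ, hψ, hx⟩
  · intro ψ hψ
    refine le_antisymm ?_ (le_iInf₂ fun x _ => iInf_le _ x)
    obtain ⟨x, hx⟩ := key ψ hψ
    calc (⨅ x ∈ {x : X | ∃ ψ' ∈ Ψ, infExt ψ' (f x) = infVal f ψ'}, infExt ψ (f x))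
        ≤ infExt ψ (f x) := iInf₂_le x ⟨ψ, hψ, hx⟩
      _ = infVal f ψ := hx
  · rintro x ⟨ψ, hψ, hx⟩
    exact ⟨ψ, hψ, le_of_eq hx⟩
end

section
/- Let X be a nonempty Hausdorff real topological vector space, Ψ nonempty, f : X → P(Z,Ψ), and ε₀ > 0 such that Min(f,ε+,Ψ) is compact for all real ε with 0 < ε ≤ ε₀. Then Min(f,0+,Ψ) is nonempty and compact, and Min(f,ε+,Ψ) Hausdorff converges to Min(f,0+,Ψ) as ε → 0: for every neighborhood U of 0 in X there is ε₁ ∈ (0,ε₀] such that for all ε ∈ (0,ε₁], Min(f,ε+,Ψ) ⊆ Min(f,0+,Ψ) + U and Min(f,0+,Ψ) ⊆ Min(f,ε+,Ψ) + U. -/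
open Set Classical Pointwise

/-!
For `ε > 0` the sets `Min(f,ε+,Ψ)` are nonempty (since `I_ψ < I_ψ + ε`, resp. `⊥ < −1/ε`) and
increase with `ε`, and `Min(f,0+,Ψ)` is their intersection. They thus form a directed family of
compact sets, so by Cantor's intersection theorem `Min(f,0+,Ψ)` is nonempty and compact, and by
compactness some member already lies in the neighbourhood `Min(f,0+,Ψ) + U` of the intersection.
The other inclusion is trivial because `Min(f,0+,Ψ) ⊆ Min(f,ε+,Ψ)` and `0 ∈ U`.
-/

open Topology

theorem exists_subset_iInter_add {X ι : Type*} [AddGroup X] [TopologicalSpace X]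
    [IsTopologicalAddGroup X] [T2Space X] [Nonempty ι] {K : ι → Set X}
    (hdir : Directed (· ⊇ ·) K) (hK : ∀ i, IsCompact (K i)) {U : Set X} (hU : U ∈ 𝓝 0) :
    ∃ i, K i ⊆ (⋂ j, K j) + U :=
  exists_subset_nhds_of_isCompact hdir hK fun _ hx =>
    Filter.mem_of_superset (vadd_mem_nhds_self.2 hU) (vadd_set_subset_add hx)

theorem isCompact_iInter {X ι : Type*} [TopologicalSpace X] [T2Space X] [Nonempty ι]
    {K : ι → Set X} (hK : ∀ i, IsCompact (K i)) : IsCompact (⋂ i, K i) :=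
  let i := Classical.arbitrary ι
  (hK i).of_isClosed_subset (isClosed_iInter fun j => (hK j).isClosed) (iInter_subset K i)

theorem negInvBound_mono {a b : ℝ} (ha : 0 ≤ a) (hab : a ≤ b) :
    negInvBound a ≤ negInvBound b := by
  unfold negInvBound
  rcases ha.eq_or_lt with rfl | ha
  · simp
  · rw [if_neg ha.ne', if_neg (ha.trans_le hab).ne', EReal.coe_le_coe_iff, neg_le_neg_iff]
    exact one_div_le_one_div_of_le ha hab

section Minimizers

variable {X Z : Type*} {Ψ : Set (Z → EReal)} (f : X → Set Z)

theorem IsEpsMin.mono {a b : ℝ} {x : X} (ha : 0 ≤ a) (hab : a ≤ b) (h : IsEpsMin Ψ f a x) :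
    IsEpsMin Ψ f b x := by
  obtain ⟨ψ, hψ, h⟩ := h
  refine ⟨ψ, hψ, ?_⟩
  split_ifs at h ⊢
  · exact h.trans (negInvBound_mono ha hab)
  · exact h.trans (add_le_add le_rfl (EReal.coe_le_coe_iff.2 hab))

theorem exists_isEpsMin [Nonempty X] (hΨ : Ψ.Nonempty) {ε : ℝ}
    (hε : 0 < ε) : ∃ x, IsEpsMin Ψ f ε x := by
  obtain ⟨ψ, hψ⟩ := hΨ
  suffices h : ∃ x, if infVal f ψ = ⊥ then infExt ψ (f x) ≤ negInvBound ε
      else infExt ψ (f x) ≤ infVal f ψ + (ε : EReal) from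
    h.imp fun x hx => ⟨ψ, hψ, hx⟩
  split_ifs with hbot
  · have hlt : infVal f ψ < negInvBound ε := by
      rw [hbot, negInvBound, if_neg hε.ne']
      exact EReal.bot_lt_coe _
    exact (iInf_lt_iff.1 hlt).imp fun _ => le_of_lt
  rcases eq_or_ne (infVal f ψ) ⊤ with htop | htop
  · exact ⟨Classical.arbitrary X, by rw [htop, EReal.top_add_coe]; exact le_top⟩
  · have hlt : infVal f ψ < infVal f ψ + (ε : EReal) := by
      lift infVal f ψ to ℝ using ⟨htop, hbot⟩ with r
      exact_mod_cast lt_add_of_pos_right r hε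
    exact (iInf_lt_iff.1 hlt).imp fun _ => le_of_lt

theorem minPlusSet_mono : Monotone (MinPlusSet Ψ f) := by
  intro a b hab x hx δ hδ
  have h := hx (b - a + δ) (by linarith)
  rwa [← add_assoc, add_sub_cancel] at h

theorem minPlusSet_nonempty [Nonempty X] (hΨ : Ψ.Nonempty) {ε : ℝ}
    (hε : 0 < ε) : (MinPlusSet Ψ f ε).Nonempty :=
  let ⟨x, hx⟩ := exists_isEpsMin f hΨ hε
  ⟨x, fun _ hδ => hx.mono f hε.le (by linarith)⟩

theorem minPlusSet_zero_eq_iInter {ε₀ : ℝ} (hε₀ : 0 < ε₀) :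
    MinPlusSet Ψ f 0 = ⋂ ε : Ioc 0 ε₀, MinPlusSet Ψ f ε := by
  refine (subset_iInter fun ε => minPlusSet_mono f ε.2.1.le).antisymm fun x hx δ hδ => ?_
  have hε : min (δ / 2) ε₀ ∈ Ioc 0 ε₀ := ⟨lt_min (half_pos hδ) hε₀, min_le_right _ _⟩
  have hεδ : min (δ / 2) ε₀ < δ := (min_le_left _ _).trans_lt (half_lt_self hδ)
  simpa only [zero_add, add_sub_cancel] using
    mem_iInter.1 hx ⟨_, hε⟩ (δ - min (δ / 2) ε₀) (sub_pos.2 hεδ)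

end Minimizers

theorem stmt16_general {X Z : Type*} [Nonempty X] [AddCommGroup X]
    [TopologicalSpace X] [IsTopologicalAddGroup X] [T2Space X]
    (Ψ : Set (Z → EReal)) (hΨ : Ψ.Nonempty)
    (f : X → Set Z)
    (ε₀ : ℝ) (hε₀ : 0 < ε₀)
    (hcpt : ∀ ε : ℝ, 0 < ε → ε ≤ ε₀ → IsCompact (MinPlusSet Ψ f ε)) :
    (MinPlusSet Ψ f 0).Nonempty ∧ IsCompact (MinPlusSet Ψ f 0) ∧
    ∀ U ∈ nhds (0 : X), ∃ ε₁ : ℝ, 0 < ε₁ ∧ ε₁ ≤ ε₀ ∧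
      ∀ ε : ℝ, 0 < ε → ε ≤ ε₁ →
        MinPlusSet Ψ f ε ⊆ MinPlusSet Ψ f 0 + U ∧
        MinPlusSet Ψ f 0 ⊆ MinPlusSet Ψ f ε + U := by
  have : Nonempty (Ioc 0 ε₀) := ⟨⟨ε₀, hε₀, le_rfl⟩⟩
  have hK : ∀ ε : Ioc 0 ε₀, IsCompact (MinPlusSet Ψ f ε) := fun ε => hcpt ε ε.2.1 ε.2.2
  have hdir : Directed (· ⊇ ·) fun ε : Ioc 0 ε₀ => MinPlusSet Ψ f ε :=
    ((minPlusSet_mono f).comp (Subtype.mono_coe _)).directed_ge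
  rw [minPlusSet_zero_eq_iInter f hε₀]
  refine ⟨?_, isCompact_iInter hK, fun U hU => ?_⟩
  · exact IsCompact.nonempty_iInter_of_directed_nonempty_isCompact_isClosed _ hdir
      (fun ε => minPlusSet_nonempty f hΨ ε.2.1) hK fun ε => (hK ε).isClosed
  obtain ⟨ε₁, hε₁⟩ := exists_subset_iInter_add hdir hK hU
  refine ⟨ε₁, ε₁.2.1, ε₁.2.2, fun ε hε hεε₁ => ⟨(minPlusSet_mono f hεε₁).trans hε₁, ?_⟩⟩
  exact (iInter_subset _ (⟨ε, hε, hεε₁.trans ε₁.2.2⟩ : Ioc 0 ε₀)).trans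
    (subset_add_left _ (mem_of_mem_nhds hU))

/-- if `Min(f,ε+,Ψ)` is compact for all `0 < ε ≤ ε₀`, then
`Min(f,0+,Ψ)` is nonempty and compact, and `Min(f,ε+,Ψ)` Hausdorff converges
to `Min(f,0+,Ψ)` as `ε → 0`. -/
theorem stmt16 {X Z : Type*} [Nonempty X] [AddCommGroup X] [Module ℝ X]
    [TopologicalSpace X] [IsTopologicalAddGroup X] [ContinuousSMul ℝ X] [T2Space X]
    [Preorder Z] (Ψ : Set (Z → EReal)) (hΨ : Ψ.Nonempty)
    (hmono : ∀ ψ ∈ Ψ, Monotone ψ) (f : X → Set Z)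
    (hf : ∀ x, f x = clPsi Ψ (f x)) (ε₀ : ℝ) (hε₀ : 0 < ε₀)
    (hcpt : ∀ ε : ℝ, 0 < ε → ε ≤ ε₀ → IsCompact (MinPlusSet Ψ f ε)) :
    (MinPlusSet Ψ f 0).Nonempty ∧ IsCompact (MinPlusSet Ψ f 0) ∧
    ∀ U ∈ nhds (0 : X), ∃ ε₁ : ℝ, 0 < ε₁ ∧ ε₁ ≤ ε₀ ∧
      ∀ ε : ℝ, 0 < ε → ε ≤ ε₁ →
        MinPlusSet Ψ f ε ⊆ MinPlusSet Ψ f 0 + U ∧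
        MinPlusSet Ψ f 0 ⊆ MinPlusSet Ψ f ε + U :=
  stmt16_general Ψ hΨ f ε₀ hε₀ hcpt
end

section
/- Let X be a nonempty Hausdorff real topological vector space, Ψ nonempty, f : X → P(Z,Ψ), and ε₀ > 0 such that Min(f,ε+,Ψ) is compact for all real ε with 0 < ε ≤ ε₀. If in addition x ↦ ψ^△(f(x)) is lower semicontinuous on X for every ψ ∈ Ψ, then Min(f,0,Ψ) is nonempty and is a (0,Ψ)-solution: for every ψ ∈ Ψ, ⨅_{x∈Min(f,0,Ψ)} ψ^△(f(x)) ≤ I_ψ, and every element of Min(f,0,Ψ) is a (0,Ψ)-minimizer of f. -/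
/-!
Fix `ψ ∈ Ψ`. Every `x` with `ψ^△(f x) ≤ I_ψ + ε₀` (or `≤ −1/ε₀` when `I_ψ = −∞`) is an
`(ε₀+,Ψ)`-minimizer, so this sublevel set of the lower semicontinuous `ψ^△ ∘ f` is a closed subset
of the compact set `Min(f,ε₀+,Ψ)`, and it is nonempty by definition of the infimum `I_ψ`.
Hence `ψ^△ ∘ f` attains `I_ψ`, at a point that is a `(0,Ψ)`-minimizer; doing this for every `ψ`
gives the solution property.
-/

open Set Classical Pointwise

theorem LowerSemicontinuous.exists_forall_le_of_isCompact_sublevel {α β : Type*}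
    [TopologicalSpace α] [LinearOrder β] {g : α → β} (hg : LowerSemicontinuous g) {b : β}
    {x₀ : α} (hx₀ : g x₀ ≤ b) (hK : IsCompact {x | g x ≤ b}) : ∃ x, ∀ y, g x ≤ g y := by
  obtain ⟨x, hxK, hmin⟩ := (hg.lowerSemicontinuousOn _).exists_isMinOn ⟨x₀, hx₀⟩ hK
  refine ⟨x, fun y => ?_⟩
  by_cases hy : g y ≤ b
  · exact hmin hy
  · exact (hxK : g x ≤ b).trans (not_le.1 hy).le

lemma negInvBound_mono_s17 {ε ε' : ℝ} (hε : 0 ≤ ε) (h : ε ≤ ε') :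
    negInvBound ε ≤ negInvBound ε' := by
  rcases eq_or_lt_of_le hε with rfl | hε
  · simp [negInvBound]
  rw [negInvBound, negInvBound, if_neg hε.ne', if_neg (hε.trans_le h).ne', EReal.coe_le_coe_iff,
    neg_le_neg_iff]
  exact one_div_le_one_div_of_le hε h

section EpsBound

variable {X Z : Type*} {Ψ : Set (Z → EReal)} {f : X → Set Z} {ψ : Z → EReal} {x : X}

noncomputable def epsBound (f : X → Set Z) (ψ : Z → EReal) (ε : ℝ) : EReal :=
  if infVal f ψ = ⊥ then negInvBound ε else infVal f ψ + ε

lemma isEpsMin_iff {ε : ℝ} :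
    IsEpsMin Ψ f ε x ↔ ∃ ψ ∈ Ψ, infExt ψ (f x) ≤ epsBound f ψ ε := by
  unfold IsEpsMin epsBound
  refine exists_congr fun ψ => and_congr_right fun _ => ?_
  split_ifs <;> rfl

lemma epsBound_zero : epsBound f ψ 0 = infVal f ψ := by
  unfold epsBound
  split_ifs with h
  · simp [negInvBound, h]
  · simp

lemma epsBound_mono {ε ε' : ℝ} (hε : 0 ≤ ε) (h : ε ≤ ε') :
    epsBound f ψ ε ≤ epsBound f ψ ε' := by
  unfold epsBound
  split_ifs
  · exact negInvBound_mono_s17 hε h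
  · exact add_le_add_right (EReal.coe_le_coe_iff.2 h) _

lemma isEpsMin_zero_iff : IsEpsMin Ψ f 0 x ↔ ∃ ψ ∈ Ψ, infExt ψ (f x) ≤ infVal f ψ := by
  simp only [isEpsMin_iff, epsBound_zero]

lemma exists_infExt_le_epsBound [Nonempty X] {ε : ℝ} (hε : 0 < ε) :
    ∃ x, infExt ψ (f x) ≤ epsBound f ψ ε := by
  rcases eq_or_ne (infVal f ψ) ⊤ with htop | htop
  · exact ⟨Classical.arbitrary X, by
      simp [epsBound, htop, EReal.top_add_of_ne_bot (EReal.coe_ne_bot ε)]⟩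
  suffices infVal f ψ < epsBound f ψ ε from (iInf_lt_iff.1 this).imp fun _ => le_of_lt
  unfold epsBound
  split_ifs with hbot
  · rw [hbot, negInvBound, if_neg hε.ne']
    exact EReal.bot_lt_coe _
  · lift infVal f ψ to ℝ using ⟨htop, hbot⟩ with r
    exact_mod_cast lt_add_of_pos_right r hε

lemma setOf_infExt_le_epsBound_subset (hψ : ψ ∈ Ψ) {ε : ℝ} (hε : 0 ≤ ε) :
    {x | infExt ψ (f x) ≤ epsBound f ψ ε} ⊆ MinPlusSet Ψ f ε :=
  fun _ hx δ hδ => isEpsMin_iff.2 ⟨ψ, hψ, hx.trans (epsBound_mono hε (by linarith))⟩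

theorem exists_infExt_le_infVal [TopologicalSpace X] [Nonempty X] (hψ : ψ ∈ Ψ) {ε : ℝ}
    (hε : 0 < ε) (hcpt : IsCompact (MinPlusSet Ψ f ε))
    (hlsc : LowerSemicontinuous fun x => infExt ψ (f x)) :
    ∃ x, infExt ψ (f x) ≤ infVal f ψ := by
  obtain ⟨x₀, hx₀⟩ := exists_infExt_le_epsBound (ψ := ψ) (f := f) hε
  have hK : IsCompact {x | infExt ψ (f x) ≤ epsBound f ψ ε} :=
    hcpt.of_isClosed_subset (hlsc.isClosed_preimage _)
      (setOf_infExt_le_epsBound_subset hψ hε.le)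
  obtain ⟨x, hx⟩ := hlsc.exists_forall_le_of_isCompact_sublevel hx₀ hK
  exact ⟨x, le_iInf hx⟩

end EpsBound

theorem stmt17_general {X Z : Type*} [Nonempty X] [TopologicalSpace X]
    (Ψ : Set (Z → EReal)) (hΨ : Ψ.Nonempty) (f : X → Set Z) (ε₀ : ℝ) (hε₀ : 0 < ε₀)
    (hcpt : ∀ ε : ℝ, 0 < ε → ε ≤ ε₀ → IsCompact (MinPlusSet Ψ f ε))
    (hlsc : ∀ ψ ∈ Ψ, LowerSemicontinuous (fun x => infExt ψ (f x))) :
    (MinSet Ψ f 0).Nonempty ∧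
    (∀ ψ ∈ Ψ, (⨅ x ∈ MinSet Ψ f 0, infExt ψ (f x)) ≤ infVal f ψ) ∧
    (∀ x ∈ MinSet Ψ f 0, ∃ ψ ∈ Ψ, infExt ψ (f x) ≤ infVal f ψ) := by
  have hattain : ∀ ψ ∈ Ψ, ∃ x, infExt ψ (f x) ≤ infVal f ψ := fun ψ hψ =>
    exists_infExt_le_infVal hψ hε₀ (hcpt ε₀ hε₀ le_rfl) (hlsc ψ hψ)
  have hmem : ∀ {ψ x}, ψ ∈ Ψ → infExt ψ (f x) ≤ infVal f ψ → x ∈ MinSet Ψ f 0 :=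
    fun hψ h => isEpsMin_zero_iff.2 ⟨_, hψ, h⟩
  obtain ⟨ψ₀, hψ₀⟩ := hΨ
  obtain ⟨x₀, hx₀⟩ := hattain ψ₀ hψ₀
  refine ⟨⟨x₀, hmem hψ₀ hx₀⟩, fun ψ hψ => ?_, fun x hx => isEpsMin_zero_iff.1 hx⟩
  obtain ⟨x, hx⟩ := hattain ψ hψ
  exact (biInf_le _ (hmem hψ hx)).trans hx

/-- if moreover each `ψ^△ ∘ f` is lower semicontinuous, then
`Min(f,0,Ψ)` is nonempty and a `(0,Ψ)`-solution. -/
theorem stmt17 {X Z : Type*} [Nonempty X] [AddCommGroup X] [Module ℝ X]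
    [TopologicalSpace X] [IsTopologicalAddGroup X] [ContinuousSMul ℝ X] [T2Space X]
    [Preorder Z] (Ψ : Set (Z → EReal)) (hΨ : Ψ.Nonempty)
    (hmono : ∀ ψ ∈ Ψ, Monotone ψ) (f : X → Set Z)
    (hf : ∀ x, f x = clPsi Ψ (f x)) (ε₀ : ℝ) (hε₀ : 0 < ε₀)
    (hcpt : ∀ ε : ℝ, 0 < ε → ε ≤ ε₀ → IsCompact (MinPlusSet Ψ f ε))
    (hlsc : ∀ ψ ∈ Ψ, LowerSemicontinuous (fun x => infExt ψ (f x))) :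
    (MinSet Ψ f 0).Nonempty ∧
    (∀ ψ ∈ Ψ, (⨅ x ∈ MinSet Ψ f 0, infExt ψ (f x)) ≤ infVal f ψ) ∧
    (∀ x ∈ MinSet Ψ f 0, ∃ ψ ∈ Ψ, infExt ψ (f x) ≤ infVal f ψ) :=
  stmt17_general Ψ hΨ f ε₀ hε₀ hcpt hlsc
end

section
/- Let Z be a real topological vector space, C ⊆ Z a closed convex cone with 0 ∈ C, C ≠ Z and nonempty interior, and e ∈ int C. Let S be a nonempty set, F : S → Z a function, and ε ≥ 0 a real number. Then x̄ ∈ S satisfies F(x) ∉ F(x̄) − ε•e − int C for all x ∈ S (i.e., x̄ is an ε·e-weakly efficient solution) if, and only if, there exists y ∈ Z such that τ_{y,e}(F(x̄)) ≤ τ_{y,e}(F(x)) + ε for all x ∈ S. -/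
/-!
With `y = F x̄` the scalarization vanishes at `F x̄`, and `τ_{y,e}(F x) < -ε` would exhibit a
point `y - ε • e - F x` of `int C`, i.e. contradict weak efficiency. Conversely, if
`F x̄ - ε • e - F x ∈ int C`, a small extra step `δ • e` stays in `int C`, and adding it to
`y + t • e - F x̄ ∈ C` shows `τ_{y,e}(F x) + ε + δ ≤ τ_{y,e}(F x̄)` for every `y`.
-/

open Set

/-- The translative scalarization `τ_{y,e}(z) = inf {t ∈ ℝ | y + t•e ∈ z + C}`. -/
noncomputable def tauReal {Z : Type*} [AddCommGroup Z] [Module ℝ Z]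
    (C : Set Z) (e y z : Z) : ℝ :=
  sInf {t : ℝ | y + t • e - z ∈ C}

open Filter Topology Pointwise

section

variable {Z : Type*} [AddCommGroup Z] [Module ℝ Z] [TopologicalSpace Z]

theorem exists_pos_smul_mem_of_mem_nhds_zero [ContinuousSMul ℝ Z] {U : Set Z}
    (hU : U ∈ 𝓝 0) (x : Z) : ∃ c : ℝ, 0 < c ∧ c • x ∈ U :=
  Eventually.exists_gt <| (continuous_id.smul continuous_const).tendsto' 0 0 (zero_smul ℝ x) hU

theorem exists_pos_sub_smul_mem_interior [IsTopologicalAddGroup Z] [ContinuousSMul ℝ Z]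
    {s : Set Z} {u : Z} (hu : u ∈ interior s) (e : Z) : ∃ δ : ℝ, 0 < δ ∧ u - δ • e ∈ interior s :=
  exists_pos_smul_mem_of_mem_nhds_zero (U := (u - ·) ⁻¹' interior s)
    ((continuous_sub_left u).continuousAt.preimage_mem_nhds
      (by simpa using isOpen_interior.mem_nhds hu)) e

namespace ConvexCone

variable {K : ConvexCone ℝ Z} {e : Z}

theorem smul_mem_interior [ContinuousSMul ℝ Z] {c : ℝ} (hc : 0 < c) {x : Z}
    (hx : x ∈ interior (K : Set Z)) : c • x ∈ interior (K : Set Z) := by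
  have hsub : c • (K : Set Z) ⊆ K := by
    rintro _ ⟨y, hy, rfl⟩
    exact K.smul_mem hc hy
  have : c • x ∈ c • interior (K : Set Z) := smul_mem_smul_set hx
  rw [← interior_smul₀ hc.ne'] at this
  exact interior_mono hsub this

theorem add_mem_interior [IsTopologicalAddGroup Z] {x y : Z} (hx : x ∈ K)
    (hy : y ∈ interior (K : Set Z)) : x + y ∈ interior (K : Set Z) := by
  have hsub : x +ᵥ (K : Set Z) ⊆ K := by
    rintro _ ⟨z, hz, rfl⟩
    exact K.add_mem hx hz
  have : x + y ∈ x +ᵥ interior (K : Set Z) := vadd_mem_vadd_set hy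
  rw [← interior_vadd] at this
  exact interior_mono hsub this

theorem zero_notMem_interior [ContinuousSMul ℝ Z] (hK : (K : Set Z) ≠ univ) :
    (0 : Z) ∉ interior (K : Set Z) := by
  refine fun h0 ↦ hK (eq_univ_of_forall fun x ↦ ?_)
  obtain ⟨c, hc, hcx⟩ := exists_pos_smul_mem_of_mem_nhds_zero (isOpen_interior.mem_nhds h0) x
  simpa [smul_smul, hc.ne'] using K.smul_mem (inv_pos.2 hc) (interior_subset hcx)

variable [IsTopologicalAddGroup Z] [ContinuousSMul ℝ Z]

theorem neg_notMem_of_mem_interior (hK : (K : Set Z) ≠ univ) (he : e ∈ interior (K : Set Z)) :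
    -e ∉ K := fun h ↦
  zero_notMem_interior hK (by simpa using add_mem_interior h he)

theorem nonneg_of_smul_mem (hK : (K : Set Z) ≠ univ) (he : e ∈ interior (K : Set Z)) {t : ℝ}
    (ht : t • e ∈ K) : 0 ≤ t := by
  by_contra! ht0
  have := K.smul_mem (inv_pos.2 (neg_pos.2 ht0)) ht
  rw [smul_smul, inv_neg, neg_mul, inv_mul_cancel₀ ht0.ne, neg_one_smul] at this
  exact neg_notMem_of_mem_interior hK he this

theorem exists_add_smul_mem (he : e ∈ interior (K : Set Z)) (w : Z) : ∃ t : ℝ, w + t • e ∈ K := by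
  have hU : (· + e) ⁻¹' interior (K : Set Z) ∈ 𝓝 0 :=
    (continuous_add_const e).continuousAt.preimage_mem_nhds
      (by simpa using isOpen_interior.mem_nhds he)
  obtain ⟨c, hc, hcw⟩ := exists_pos_smul_mem_of_mem_nhds_zero hU w
  refine ⟨c⁻¹, ?_⟩
  simpa [smul_add, smul_smul, hc.ne'] using K.smul_mem (inv_pos.2 hc) (interior_subset hcw)

theorem bddBelow_setOf_add_smul_mem (hK : (K : Set Z) ≠ univ) (he : e ∈ interior (K : Set Z))
    (w : Z) : BddBelow {t : ℝ | w + t • e ∈ K} := by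
  obtain ⟨a, ha⟩ := exists_add_smul_mem he (-w)
  refine ⟨-a, fun t ht ↦ ?_⟩
  have : (t + a) • e ∈ K := by
    convert K.add_mem ht ha using 1
    module
  linarith [nonneg_of_smul_mem hK he this]

end ConvexCone

section tauReal

variable [IsTopologicalAddGroup Z] [ContinuousSMul ℝ Z] {K : ConvexCone ℝ Z} {e : Z}

theorem tauReal_le (hK : (K : Set Z) ≠ univ) (he : e ∈ interior (K : Set Z)) {y z : Z} {t : ℝ}
    (ht : y + t • e - z ∈ K) : tauReal K e y z ≤ t :=
  csInf_le (by simpa [add_sub_right_comm] using K.bddBelow_setOf_add_smul_mem hK he (y - z)) ht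

theorem le_tauReal (he : e ∈ interior (K : Set Z)) {y z : Z} {r : ℝ}
    (h : ∀ t, y + t • e - z ∈ K → r ≤ t) : r ≤ tauReal K e y z := by
  obtain ⟨t, ht⟩ := K.exists_add_smul_mem he (y - z)
  exact le_csInf ⟨t, by simpa [add_sub_right_comm] using ht⟩ h

theorem le_tauReal_of_notMem_interior (he : e ∈ interior (K : Set Z)) {y z : Z} {r : ℝ}
    (h : y + r • e - z ∉ interior (K : Set Z)) : r ≤ tauReal K e y z := by
  refine le_tauReal he fun t ht ↦ ?_
  by_contra! hrt
  refine h ?_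
  convert K.add_mem_interior ht (K.smul_mem_interior (sub_pos.2 hrt) he) using 1
  module

theorem tauReal_self (hK : (K : Set Z) ≠ univ) (he : e ∈ interior (K : Set Z)) (h0 : (0 : Z) ∈ K)
    (y : Z) : tauReal K e y y = 0 :=
  le_antisymm (tauReal_le hK he (by simpa using h0))
    (le_tauReal_of_notMem_interior he (by simpa using K.zero_notMem_interior hK))

theorem tauReal_add_lt_of_sub_mem_interior (hK : (K : Set Z) ≠ univ)
    (he : e ∈ interior (K : Set Z)) (y : Z) {z₁ z₂ : Z} {r : ℝ}
    (h : z₁ - r • e - z₂ ∈ interior (K : Set Z)) : tauReal K e y z₂ + r < tauReal K e y z₁ := by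
  obtain ⟨δ, hδ, hδmem⟩ := exists_pos_sub_smul_mem_interior h e
  have : tauReal K e y z₂ + r + δ ≤ tauReal K e y z₁ := by
    refine le_tauReal he fun t ht ↦ ?_
    have : y + (t - r - δ) • e - z₂ ∈ K := by
      convert K.add_mem ht (interior_subset hδmem) using 1
      module
    linarith [tauReal_le hK he this]
  linarith

end tauReal

end

theorem stmt18_general {Z : Type*} [AddCommGroup Z] [Module ℝ Z] [TopologicalSpace Z]
    [IsTopologicalAddGroup Z] [ContinuousSMul ℝ Z]
    (C : Set Z)
    (hCadd : ∀ c₁ ∈ C, ∀ c₂ ∈ C, c₁ + c₂ ∈ C)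
    (hCsmul : ∀ t : ℝ, 0 ≤ t → ∀ c ∈ C, t • c ∈ C)
    (hC0 : (0 : Z) ∈ C) (hCne : C ≠ univ)
    (e : Z) (he : e ∈ interior C)
    {S : Type*} (F : S → Z) (ε : ℝ) (xbar : S) :
    (∀ x : S, F xbar - ε • e - F x ∉ interior C) ↔
      ∃ y : Z, ∀ x : S, tauReal C e y (F xbar) ≤ tauReal C e y (F x) + ε := by
  obtain ⟨K, rfl⟩ : ∃ K : ConvexCone ℝ Z, (K : Set Z) = C :=
    ⟨⟨C, fun t ht c hc ↦ hCsmul t ht.le c hc, hCadd⟩, rfl⟩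
  constructor
  · intro hweak
    refine ⟨F xbar, fun x ↦ ?_⟩
    have : -ε ≤ tauReal K e (F xbar) (F x) :=
      le_tauReal_of_notMem_interior he (by simpa [sub_eq_add_neg] using hweak x)
    rw [tauReal_self hCne he hC0]
    linarith
  · rintro ⟨y, hy⟩ x hx
    linarith [hy x, tauReal_add_lt_of_sub_mem_interior hCne he y hx]

/-- `x̄` is an `ε·e`-weakly efficient solution of `F` on `S`
iff there is `y ∈ Z` with `τ_{y,e}(F(x̄)) ≤ τ_{y,e}(F(x)) + ε` for all `x ∈ S`. -/
theorem stmt18 {Z : Type*} [AddCommGroup Z] [Module ℝ Z] [TopologicalSpace Z]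
    [IsTopologicalAddGroup Z] [ContinuousSMul ℝ Z]
    (C : Set Z) (hCclosed : IsClosed C)
    (hCadd : ∀ c₁ ∈ C, ∀ c₂ ∈ C, c₁ + c₂ ∈ C)
    (hCsmul : ∀ t : ℝ, 0 ≤ t → ∀ c ∈ C, t • c ∈ C)
    (hC0 : (0 : Z) ∈ C) (hCne : C ≠ univ)
    (e : Z) (he : e ∈ interior C)
    {S : Type*} [Nonempty S] (F : S → Z) (ε : ℝ) (hε : 0 ≤ ε) (xbar : S) :
    (∀ x : S, F xbar - ε • e - F x ∉ interior C) ↔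
      ∃ y : Z, ∀ x : S, tauReal C e y (F xbar) ≤ tauReal C e y (F x) + ε :=
  stmt18_general C hCadd hCsmul hC0 hCne e he F ε xbar
end

section
/- Let X and Z be real topological vector spaces, C ⊆ Z a convex cone with 0 ∈ C and int C ≠ ∅, e ∈ int C, ε ≥ 0 a real number, S ⊆ X a nonempty set, and F : X → Z a function that is C-continuous at every point of S. Then wEff_{εe}(F,S) = {x̄ ∈ S | ∀ x ∈ S, F(x) ∉ F(x̄) − ε•e − int C} is closed relative to S: every point of closure(wEff_{εe}(F,S)) ∩ S belongs to wEff_{εe}(F,S). -/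
open Set Pointwise Filter Topology

/-!
If `F x̄ - ε • e - F x` lies in the open set `int C`, then so does `F x̄ - ε • e - F x + w`
for all small `w`. By `C`-continuity every `y ∈ S` near `x̄` has `F y ∈ F x̄ + w + C` for
such a `w`, and `int C + C ⊆ int C` gives `F y - ε • e - F x ∈ int C`. So failing to be
`ε • e`-weakly efficient is an open condition relative to `S`.
-/

section ConeContinuity

variable {X Z : Type*} [AddGroup X] [TopologicalSpace X] [AddCommGroup Z] [TopologicalSpace Z]

def ConeContinuousWithinAt (C : Set Z) (F : X → Z) (S : Set X) (x₀ : X) : Prop :=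
  ∀ W ∈ 𝓝 (0 : Z), ∃ U ∈ 𝓝 (0 : X), ∀ x ∈ S, x - x₀ ∈ U → F x ∈ {F x₀} + W + C

theorem ConeContinuousWithinAt.eventually_mem [ContinuousSub X] {C : Set Z} {F : X → Z}
    {S : Set X} {x₀ : X} (hF : ConeContinuousWithinAt C F S x₀) {W : Set Z} (hW : W ∈ 𝓝 0) :
    ∀ᶠ x in 𝓝[S] x₀, F x ∈ {F x₀} + W + C := by
  obtain ⟨U, hU, hFU⟩ := hF W hW
  have hU' : {x | x - x₀ ∈ U} ∈ 𝓝 x₀ :=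
    (continuous_sub_right x₀).tendsto' x₀ 0 (sub_self x₀) hU
  filter_upwards [mem_nhdsWithin_of_mem_nhds hU', self_mem_nhdsWithin] with x hxU hxS
  exact hFU x hxS hxU

theorem interior_add_subset_interior [ContinuousAdd Z] {C : Set Z} (hC : C + C ⊆ C) :
    interior C + C ⊆ interior C :=
  subset_interior_add_left.trans (interior_mono hC)

theorem ConeContinuousWithinAt.eventually_sub_mem_interior [ContinuousSub X] [ContinuousAdd Z]
    {C : Set Z} (hC : C + C ⊆ C) {F : X → Z} {S : Set X} {x₀ : X}
    (hF : ConeContinuousWithinAt C F S x₀) {z : Z} (hz : F x₀ - z ∈ interior C) :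
    ∀ᶠ x in 𝓝[S] x₀, F x - z ∈ interior C := by
  have hW : {w | F x₀ - z + w ∈ interior C} ∈ 𝓝 (0 : Z) :=
    (continuous_const_add _).tendsto' 0 _ (add_zero _) (isOpen_interior.mem_nhds hz)
  filter_upwards [hF.eventually_mem hW] with x hx
  obtain ⟨_, ⟨_, rfl, w, hw, rfl⟩, c, hc, hx⟩ := hx
  rw [← hx, show F x₀ + w + c - z = F x₀ - z + w + c by abel]
  exact interior_add_subset_interior hC (add_mem_add hw hc)

end ConeContinuity

theorem stmt19_general {X Z : Type*}
    [AddCommGroup X] [TopologicalSpace X]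
    [IsTopologicalAddGroup X]
    [AddCommGroup Z] [Module ℝ Z] [TopologicalSpace Z]
    [IsTopologicalAddGroup Z]
    (C : Set Z) (hCadd : ∀ c₁ ∈ C, ∀ c₂ ∈ C, c₁ + c₂ ∈ C)
    (e : Z) (ε : ℝ)
    (S : Set X) (F : X → Z)
    (hF : ∀ xbar ∈ S, ∀ W ∈ nhds (0 : Z), ∃ U ∈ nhds (0 : X),
      ∀ x ∈ S, x - xbar ∈ U → F x ∈ {F xbar} + W + C) :
    closure {xbar ∈ S | ∀ x ∈ S, F xbar - ε • e - F x ∉ interior C} ∩ S ⊆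
      {xbar ∈ S | ∀ x ∈ S, F xbar - ε • e - F x ∉ interior C} := by
  set E := {xbar ∈ S | ∀ x ∈ S, F xbar - ε • e - F x ∉ interior C}
  rintro xbar ⟨hclosure, hxbar⟩
  refine ⟨hxbar, fun x hxS hx => ?_⟩
  rw [sub_sub] at hx
  have hnear : ∀ᶠ y in 𝓝[E] xbar, F y - (ε • e + F x) ∈ interior C :=
    nhdsWithin_mono _ (sep_subset _ _)
      (ConeContinuousWithinAt.eventually_sub_mem_interior (add_subset_iff.mpr hCadd)
        (hF xbar hxbar) hx)
  have := mem_closure_iff_nhdsWithin_neBot.mp hclosure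
  obtain ⟨y, ⟨hyS, hyE⟩, hy⟩ := (eventually_mem_nhdsWithin.and hnear).exists
  exact hyE x hxS (by rwa [sub_sub])

/-- if `F` is `C`-continuous at every point of `S`, then the set
`wEff_{εe}(F,S)` of `ε·e`-weakly efficient solutions is closed relative to `S`. -/
theorem stmt19 {X Z : Type*}
    [AddCommGroup X] [Module ℝ X] [TopologicalSpace X]
    [IsTopologicalAddGroup X] [ContinuousSMul ℝ X]
    [AddCommGroup Z] [Module ℝ Z] [TopologicalSpace Z]
    [IsTopologicalAddGroup Z] [ContinuousSMul ℝ Z]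
    (C : Set Z) (hCadd : ∀ c₁ ∈ C, ∀ c₂ ∈ C, c₁ + c₂ ∈ C)
    (hCsmul : ∀ t : ℝ, 0 ≤ t → ∀ c ∈ C, t • c ∈ C)
    (hC0 : (0 : Z) ∈ C) (hCint : (interior C).Nonempty)
    (e : Z) (he : e ∈ interior C) (ε : ℝ) (hε : 0 ≤ ε)
    (S : Set X) (hS : S.Nonempty) (F : X → Z)
    (hF : ∀ xbar ∈ S, ∀ W ∈ nhds (0 : Z), ∃ U ∈ nhds (0 : X),
      ∀ x ∈ S, x - xbar ∈ U → F x ∈ {F xbar} + W + C) :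
    closure {xbar ∈ S | ∀ x ∈ S, F xbar - ε • e - F x ∉ interior C} ∩ S ⊆
      {xbar ∈ S | ∀ x ∈ S, F xbar - ε • e - F x ∉ interior C} :=
  stmt19_general C hCadd e ε S F hF
end
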